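/- arXiv:1709.00748 — 3 statements merged into one kernel-verified Lean document; each statement's English description precedes it below -/
import Mathlib

section
/- Let n ≥ 2 and let λ be a real number with 0 < λ ≤ (n−1)/2. There is a constant C_λ, depending only on n and λ, such that for every sphere S_ρ ⊂ ℝⁿ of radius ρ > 0 (with arbitrary center) and every x ∈ ℝⁿ one has ∫_{S_ρ} |x − y|^{−(n−1−2λ)} dσ_ρ(y) ≤ C_λ ρ^{2λ}, where σ_ρ denotes the surface measure ((n−1)-dimensional Hausdorff measure) on S_ρ. -/
open MeasureTheory
open scoped ENNReal

noncomputable section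

abbrev Euc (n : ℕ) := EuclideanSpace ℝ (Fin n)

/-!
The homothety `y = z + ρ w` turns the integral into `ρ ^ (2λ)` times the integral of
`|x' - w| ^ (-α)` over the unit sphere, where `α = n - 1 - 2λ ∈ [0, n - 1)`. The unit sphere is
upper Ahlfors regular of dimension `n - 1`: a cap of radius `s` is the radial projection of a disc
of radius `2s` in the tangent hyperplane, and radial projection is `1`-Lipschitz outside the unit
ball. Splitting the sphere dyadically according to the distance to `x'` then bounds the integral by
a geometric series of ratio `2 ^ (α - (n - 1)) < 1`, uniformly in `x'`.
-/

open Metric Set Module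
open scoped NNReal RealInnerProductSpace

theorem Real.exists_le_inv_two_pow_rpow_neg_le {t α : ℝ} (ht0 : 0 < t) (ht1 : t < 1)
    (hα : 0 ≤ α) : ∃ k : ℕ, t ≤ 2⁻¹ ^ k ∧ t ^ (-α) ≤ (2 ^ α) ^ (k + 1) := by
  obtain ⟨k, hk, hk'⟩ := exists_nat_pow_near (one_le_inv_iff₀.2 ⟨ht0, ht1.le⟩) one_lt_two
  refine ⟨k, ?_, ?_⟩
  · rw [inv_pow]
    exact le_inv_of_le_inv₀ (by positivity) hk
  · rw [Real.rpow_neg ht0.le, ← Real.inv_rpow ht0.le, Real.rpow_pow_comm zero_le_two]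
    exact Real.rpow_le_rpow (by positivity) hk'.le hα

section Dyadic

variable {X : Type*} [PseudoMetricSpace X]

theorem ofReal_rpow_neg_dist_le_one_add_tsum {α : ℝ} (hα : 0 ≤ α) (x w : X) :
    ENNReal.ofReal (dist x w ^ (-α)) ≤
      1 + ∑' k : ℕ, (closedBall x (2⁻¹ ^ k)).indicator
        (fun _ => ENNReal.ofReal (2 ^ α) ^ (k + 1)) w := by
  rcases (dist_nonneg (x := x) (y := w)).eq_or_lt with h0 | h0
  · rw [← h0]
    exact (ENNReal.ofReal_le_one.2 (Real.zero_rpow_le_one _)).trans le_self_add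
  rcases le_or_gt 1 (dist x w) with h1 | h1
  · exact (ENNReal.ofReal_le_one.2 (Real.rpow_le_one_of_one_le_of_nonpos h1 (by linarith))).trans
      le_self_add
  obtain ⟨k, hk, hk'⟩ := Real.exists_le_inv_two_pow_rpow_neg_le h0 h1 hα
  refine le_add_left (le_trans ?_ (ENNReal.le_tsum k))
  rw [indicator_of_mem (by rwa [mem_closedBall, dist_comm]), ← ENNReal.ofReal_pow (by positivity)]
  exact ENNReal.ofReal_le_ofReal hk'

variable [MeasurableSpace X] [OpensMeasurableSpace X]

theorem exists_lintegral_rpow_neg_dist_le (μ : Measure X) [IsFiniteMeasure μ] {K : ℝ≥0∞}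
    (hK : K ≠ ∞) {d α : ℝ} (hα : 0 ≤ α) (hαd : α < d)
    (hμ : ∀ x r, 0 < r → r ≤ 1 → μ (closedBall x r) ≤ K * ENNReal.ofReal (r ^ d)) :
    ∃ B : ℝ≥0∞, B ≠ ∞ ∧ ∀ x, ∫⁻ w, ENNReal.ofReal (dist x w ^ (-α)) ∂μ ≤ B := by
  set q := ENNReal.ofReal (2 ^ α) * ENNReal.ofReal (2⁻¹ ^ d) with hq_def
  have hq : q < 1 := by
    rw [hq_def, ← ENNReal.ofReal_mul (by positivity), ENNReal.ofReal_lt_one,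
      Real.inv_rpow zero_le_two, ← div_eq_mul_inv, div_lt_one (by positivity)]
    exact Real.rpow_lt_rpow_of_exponent_lt one_lt_two hαd
  refine ⟨μ univ + ENNReal.ofReal (2 ^ α) * K * (1 - q)⁻¹, ?_, fun x => ?_⟩
  · exact ENNReal.add_ne_top.2 ⟨measure_ne_top μ univ, ENNReal.mul_ne_top
      (ENNReal.mul_ne_top ENNReal.ofReal_ne_top hK) (ENNReal.inv_ne_top.2 (tsub_pos_of_lt hq).ne')⟩
  calc ∫⁻ w, ENNReal.ofReal (dist x w ^ (-α)) ∂μ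
      ≤ ∫⁻ w, 1 + ∑' k : ℕ, (closedBall x (2⁻¹ ^ k)).indicator
          (fun _ => ENNReal.ofReal (2 ^ α) ^ (k + 1)) w ∂μ :=
        lintegral_mono (ofReal_rpow_neg_dist_le_one_add_tsum hα x)
    _ = μ univ + ∑' k : ℕ, ENNReal.ofReal (2 ^ α) ^ (k + 1) * μ (closedBall x (2⁻¹ ^ k)) := by
        rw [lintegral_add_left measurable_const, lintegral_one, lintegral_tsum fun k =>
          (measurable_const.indicator measurableSet_closedBall).aemeasurable]
        simp_rw [lintegral_indicator_const measurableSet_closedBall]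
    _ ≤ μ univ + ∑' k : ℕ,
          ENNReal.ofReal (2 ^ α) ^ (k + 1) * (K * ENNReal.ofReal ((2⁻¹ ^ k) ^ d)) := by
        gcongr with k
        exact hμ x _ (by positivity) (pow_le_one₀ (by norm_num) (by norm_num))
    _ = μ univ + ENNReal.ofReal (2 ^ α) * K * (1 - q)⁻¹ := by
        rw [← ENNReal.tsum_geometric, ← ENNReal.tsum_mul_left]
        congr 2 with k
        rw [← Real.rpow_pow_comm (by norm_num), ENNReal.ofReal_pow (by positivity), mul_pow]
        ring

end Dyadic

section Homothety

variable {E : Type*} [NormedAddCommGroup E] [NormedSpace ℝ E] [MeasurableSpace E] [BorelSpace E]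

theorem map_add_smul_hausdorffMeasure {d : ℝ} (hd : 0 ≤ d) (z : E) {ρ : ℝ} (hρ : ρ ≠ 0) :
    Measure.map (fun w => z + ρ • w) μH[d] = ‖ρ‖₊⁻¹ ^ d • μH[d] := by
  have hT : (fun w => z + ρ • w) = AffineMap.homothety z ρ ∘ IsometryEquiv.addRight z := by
    ext w
    simp [AffineMap.homothety_apply, add_comm]
  rw [hT, ← Measure.map_map (AffineMap.homothety_continuous z ρ).measurable
    (IsometryEquiv.addRight z).continuous.measurable,
    (IsometryEquiv.measurePreserving_hausdorffMeasure _ d).map_eq,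
    map_homothety_hausdorffMeasure hd z hρ]

theorem setLIntegral_sphere_hausdorffMeasure {d : ℝ} (hd : 0 ≤ d) {f : E → ℝ≥0∞}
    (hf : Measurable f) (z : E) {ρ : ℝ} (hρ : 0 < ρ) :
    ∫⁻ y in sphere z ρ, f y ∂μH[d] =
      ENNReal.ofReal (ρ ^ d) * ∫⁻ w in sphere 0 1, f (z + ρ • w) ∂μH[d] := by
  have hpre : (fun w => z + ρ • w) ⁻¹' sphere z ρ = sphere 0 1 := by
    ext w
    simp [norm_smul, abs_of_pos hρ, hρ.ne']
  have hρd : ENNReal.ofReal (ρ ^ d) = ((‖ρ‖₊ ^ d : ℝ≥0) : ℝ≥0∞) := by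
    rw [← ENNReal.ofReal_coe_nnreal, NNReal.coe_rpow, coe_nnnorm, Real.norm_of_nonneg hρ.le]
  rw [← hpre, ← setLIntegral_map isClosed_sphere.measurableSet hf (by fun_prop),
    map_add_smul_hausdorffMeasure hd z hρ.ne', Measure.restrict_smul, lintegral_smul_measure,
    ENNReal.smul_def, smul_eq_mul, ← mul_assoc, hρd, ← ENNReal.coe_mul, ← NNReal.mul_rpow,
    mul_inv_cancel₀ (by simpa using hρ.ne'), NNReal.one_rpow, ENNReal.coe_one, one_mul]

theorem setLIntegral_sphere_rpow_neg_dist {d : ℝ} (hd : 0 ≤ d) (α : ℝ) (x z : E) {ρ : ℝ}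
    (hρ : 0 < ρ) :
    ∫⁻ y in sphere z ρ, ENNReal.ofReal (‖x - y‖ ^ (-α)) ∂μH[d] =
      ENNReal.ofReal (ρ ^ (d - α)) *
        ∫⁻ w in sphere 0 1, ENNReal.ofReal (dist (ρ⁻¹ • (x - z)) w ^ (-α)) ∂μH[d] := by
  have hdist : ∀ w : E, ‖x - (z + ρ • w)‖ = ρ * dist (ρ⁻¹ • (x - z)) w := fun w => by
    rw [show x - (z + ρ • w) = ρ • (ρ⁻¹ • (x - z) - w) by
        rw [smul_sub, smul_inv_smul₀ hρ.ne']; abel,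
      norm_smul, Real.norm_of_nonneg hρ.le, dist_eq_norm]
  rw [setLIntegral_sphere_hausdorffMeasure hd (f := fun y => ENNReal.ofReal (‖x - y‖ ^ (-α)))
    (by fun_prop) z hρ]
  simp_rw [hdist, Real.mul_rpow hρ.le dist_nonneg, ENNReal.ofReal_mul (Real.rpow_nonneg hρ.le _)]
  rw [lintegral_const_mul' _ _ ENNReal.ofReal_ne_top, ← mul_assoc,
    ← ENNReal.ofReal_mul (by positivity), ← Real.rpow_add hρ, ← sub_eq_add_neg]

end Homothety

section SphereCaps

variable {E : Type*} [NormedAddCommGroup E] [InnerProductSpace ℝ E]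

theorem norm_inv_smul_sub_norm_inv_smul_le {a b : E} (ha : 1 ≤ ‖a‖) (hb : 1 ≤ ‖b‖) :
    ‖‖a‖⁻¹ • a - ‖b‖⁻¹ • b‖ ≤ ‖a - b‖ := by
  have hab : 1 ≤ ‖a‖ * ‖b‖ := one_le_mul_of_one_le_of_one_le ha hb
  have key : ⟪a, b⟫ * (1 - (‖a‖ * ‖b‖)⁻¹) ≤ ‖a‖ * ‖b‖ - 1 :=
    calc _ ≤ ‖a‖ * ‖b‖ * (1 - (‖a‖ * ‖b‖)⁻¹) := mul_le_mul_of_nonneg_right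
          (real_inner_le_norm a b) (sub_nonneg.2 (inv_le_one_of_one_le₀ hab))
      _ = _ := by rw [mul_sub, mul_one, mul_inv_cancel₀ (by positivity)]
  rw [← sq_le_sq₀ (norm_nonneg _) (norm_nonneg _), norm_sub_sq_real, norm_sub_sq_real,
    norm_smul, norm_smul, real_inner_smul_left, real_inner_smul_right, norm_inv, norm_norm,
    norm_inv, norm_norm, inv_mul_cancel₀ (by positivity), inv_mul_cancel₀ (by positivity)]
  have hinner : ‖a‖⁻¹ * (‖b‖⁻¹ * ⟪a, b⟫) = ⟪a, b⟫ * (‖a‖ * ‖b‖)⁻¹ := by rw [mul_inv]; ring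
  linarith [sq_nonneg (‖a‖ - ‖b‖)]

theorem lipschitzWith_normalize_add_of_inner_eq_zero {F : Type*} [NormedAddCommGroup F]
    [InnerProductSpace ℝ F] (J : F →ₗᵢ[ℝ] E) {p : E} (hp : ‖p‖ = 1) (hJ : ∀ u, ⟪p, J u⟫ = 0) :
    LipschitzWith 1 (fun u => ‖p + J u‖⁻¹ • (p + J u)) := by
  have hnorm : ∀ u, 1 ≤ ‖p + J u‖ := fun u => by
    have := norm_add_sq_eq_norm_sq_add_norm_sq_real (hJ u)
    nlinarith [norm_nonneg (p + J u), sq_nonneg ‖J u‖]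
  refine LipschitzWith.of_dist_le_mul fun u v => ?_
  rw [dist_eq_norm, dist_eq_norm, NNReal.coe_one, one_mul]
  calc _ ≤ ‖(p + J u) - (p + J v)‖ := norm_inv_smul_sub_norm_inv_smul_le (hnorm u) (hnorm v)
    _ = ‖u - v‖ := by rw [add_sub_add_left_eq_sub, ← map_sub, J.norm_map]

theorem exists_linearIsometry_orthogonal_singleton (m : ℕ) [Fact (finrank ℝ E = m + 1)] {p : E}
    (hp : p ≠ 0) :
    ∃ J : Euc m →ₗᵢ[ℝ] E, (∀ u, ⟪p, J u⟫ = 0) ∧ ∀ v, ⟪p, v⟫ = 0 → ∃ u, J u = v := by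
  let b := OrthonormalBasis.fromOrthogonalSpanSingleton (𝕜 := ℝ) m hp
  refine ⟨(ℝ ∙ p)ᗮ.subtypeₗᵢ.comp b.repr.symm.toLinearIsometry, fun u => ?_, fun v hv => ?_⟩
  · exact Submodule.mem_orthogonal_singleton_iff_inner_right.1 (b.repr.symm u).2
  · refine ⟨b.repr ⟨v, Submodule.mem_orthogonal_singleton_iff_inner_right.2 hv⟩, ?_⟩
    simp

theorem sphere_inter_closedBall_subset_image_normalize_add {F : Type*} [NormedAddCommGroup F]
    [InnerProductSpace ℝ F] (J : F →ₗᵢ[ℝ] E) {p : E} (hp : ‖p‖ = 1)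
    (hJ : ∀ v, ⟪p, v⟫ = 0 → ∃ u, J u = v) {s : ℝ} (hs : s ≤ 1) :
    sphere 0 1 ∩ closedBall p s ⊆
      (fun u => ‖p + J u‖⁻¹ • (p + J u)) '' closedBall 0 (2 * s) := by
  rintro w ⟨hw, hwp⟩
  rw [mem_sphere_zero_iff_norm] at hw
  rw [mem_closedBall, dist_eq_norm] at hwp
  set c := ⟪p, w⟫
  have hwp_sq : ‖w - p‖ ^ 2 = 2 - 2 * c := by
    rw [norm_sub_sq_real, hw, hp, real_inner_comm]
    ring
  have hc : 1 / 2 ≤ c := by nlinarith [norm_nonneg (w - p)]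
  set v := w - c • p
  have hpv : ⟪p, v⟫ = 0 := by
    simp only [v, c, inner_sub_right, real_inner_smul_right, real_inner_self_eq_norm_sq, hp]
    ring
  have hv : ‖v‖ ≤ s := by
    have : ‖w - p‖ ^ 2 = ‖v‖ ^ 2 + (1 - c) ^ 2 := by
      rw [show w - p = v - (1 - c) • p by simp only [v, sub_smul, one_smul]; abel,
        norm_sub_sq_real, real_inner_smul_right, real_inner_comm, hpv, norm_smul, hp]
      simp
    nlinarith [norm_nonneg v, norm_nonneg (w - p)]
  obtain ⟨u, hu⟩ := hJ (c⁻¹ • v) (by rw [real_inner_smul_right, hpv, mul_zero])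
  have hpu : p + J u = c⁻¹ • w := by
    rw [hu, smul_sub, smul_smul, inv_mul_cancel₀ (by linarith), one_smul]
    abel
  refine ⟨u, ?_, ?_⟩
  · rw [mem_closedBall_zero_iff, ← J.norm_map, hu, norm_smul, Real.norm_eq_abs,
      abs_of_pos (inv_pos.2 (by linarith)), inv_mul_le_iff₀ (by linarith)]
    nlinarith [(norm_nonneg v).trans hv]
  · simp only [hpu, norm_smul, hw, Real.norm_eq_abs, abs_inv, abs_of_pos (by linarith : 0 < c),
      mul_one, inv_inv, smul_smul, mul_inv_cancel₀ (by linarith : c ≠ 0), one_smul]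

variable [MeasurableSpace E] [BorelSpace E] (m : ℕ) [Fact (finrank ℝ E = m + 1)]

theorem hausdorffMeasure_sphere_inter_closedBall_le {p : E} (hp : ‖p‖ = 1) {s : ℝ}
    (hs0 : 0 ≤ s) (hs1 : s ≤ 1) :
    μH[m] (sphere (0 : E) 1 ∩ closedBall p s) ≤
      ENNReal.ofReal ((2 * s) ^ m) * μH[m] (closedBall (0 : Euc m) 1) := by
  obtain ⟨J, hJp, hJ⟩ :=
    exists_linearIsometry_orthogonal_singleton m (p := p) (by rintro rfl; simp at hp)
  calc _ ≤ μH[m] ((fun u => ‖p + J u‖⁻¹ • (p + J u)) '' closedBall 0 (2 * s)) :=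
        measure_mono (sphere_inter_closedBall_subset_image_normalize_add J hp hJ hs1)
    _ ≤ μH[m] (closedBall (0 : Euc m) (2 * s)) := by
        simpa using (lipschitzWith_normalize_add_of_inner_eq_zero J hp hJp).lipschitzOnWith
          |>.hausdorffMeasure_image_le (s := closedBall 0 (2 * s)) m.cast_nonneg
    _ = _ := by rw [Measure.addHaar_closedBall' _ _ (by positivity), finrank_euclideanSpace_fin]

theorem hausdorffMeasure_sphere_lt_top : μH[m] (sphere (0 : E) 1) < ∞ := by
  have : FiniteDimensional ℝ E := .of_fact_finrank_eq_succ m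
  refine (isCompact_sphere 0 1).measure_lt_top_of_nhdsWithin fun p hp => ?_
  refine ⟨sphere 0 1 ∩ closedBall p 1, inter_mem_nhdsWithin _ (closedBall_mem_nhds p one_pos), ?_⟩
  exact (hausdorffMeasure_sphere_inter_closedBall_le m (mem_sphere_zero_iff_norm.1 hp)
    zero_le_one le_rfl).trans_lt (ENNReal.mul_lt_top ENNReal.ofReal_lt_top
      measure_closedBall_lt_top)

theorem exists_hausdorffMeasure_closedBall_inter_sphere_le :
    ∃ K : ℝ≥0∞, K ≠ ∞ ∧ ∀ (x : E) (r : ℝ), 0 < r →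
      μH[m] (closedBall x r ∩ sphere 0 1) ≤ K * ENNReal.ofReal (r ^ m) := by
  set B := μH[m] (closedBall (0 : Euc m) 1)
  set S := sphere (0 : E) 1
  refine ⟨ENNReal.ofReal (4 ^ m) * B + ENNReal.ofReal (2 ^ m) * μH[m] S, ?_, fun x r hr => ?_⟩
  · exact ENNReal.add_ne_top.2
      ⟨ENNReal.mul_ne_top ENNReal.ofReal_ne_top measure_closedBall_lt_top.ne,
        ENNReal.mul_ne_top ENNReal.ofReal_ne_top (hausdorffMeasure_sphere_lt_top m).ne⟩
  rw [add_mul]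
  rcases le_or_gt r (1 / 2) with hr2 | hr2
  · refine le_add_right ?_
    rcases (closedBall x r ∩ S).eq_empty_or_nonempty with h | ⟨q, hqx, hq⟩
    · simp [h]
    have hsub : closedBall x r ∩ S ⊆ S ∩ closedBall q (2 * r) := fun w ⟨hwx, hw⟩ =>
      ⟨hw, by rw [mem_closedBall] at *; linarith [dist_triangle_right w q x]⟩
    calc _ ≤ ENNReal.ofReal ((2 * (2 * r)) ^ m) * B :=
          (measure_mono hsub).trans (hausdorffMeasure_sphere_inter_closedBall_le m
            (mem_sphere_zero_iff_norm.1 hq) (by positivity) (by linarith))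
      _ = _ := by
          rw [show 2 * (2 * r) = 4 * r by ring, mul_pow, ENNReal.ofReal_mul (by positivity)]
          ring
  · refine le_add_left ?_
    calc _ ≤ μH[m] S := measure_mono inter_subset_right
      _ ≤ ENNReal.ofReal (2 ^ m) * μH[m] S * ENNReal.ofReal (r ^ m) := by
          rw [mul_right_comm, ← ENNReal.ofReal_mul (by positivity), ← mul_pow]
          exact le_mul_of_one_le_left zero_le
            (ENNReal.one_le_ofReal.2 (one_le_pow₀ (by linarith)))

end SphereCaps

theorem stmt0_general (n : ℕ) (lam : ℝ) (hlam0 : 0 < lam)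
    (hlam1 : lam ≤ ((n : ℝ) - 1) / 2) :
    ∃ C : ℝ, 0 < C ∧ ∀ (z : Euc n) (ρ : ℝ), 0 < ρ → ∀ x : Euc n,
      (∫⁻ y in Metric.sphere z ρ,
          ENNReal.ofReal (‖x - y‖ ^ (-((n : ℝ) - 1 - 2 * lam)))
          ∂(MeasureTheory.Measure.hausdorffMeasure ((n : ℝ) - 1)))
        ≤ ENNReal.ofReal (C * ρ ^ (2 * lam)) := by
  obtain ⟨m, rfl⟩ := Nat.exists_eq_add_one_of_ne_zero (n := n) (by
    rintro rfl
    norm_num at hlam1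
    linarith)
  rw [show ((m + 1 : ℕ) : ℝ) - 1 = m by push_cast; ring] at hlam1 ⊢
  have : Fact (finrank ℝ (Euc (m + 1)) = m + 1) := ⟨finrank_euclideanSpace_fin⟩
  set S := sphere (0 : Euc (m + 1)) 1
  have : IsFiniteMeasure (μH[m].restrict S) :=
    isFiniteMeasure_restrict.2 (hausdorffMeasure_sphere_lt_top m).ne
  obtain ⟨K, hK, hball⟩ := exists_hausdorffMeasure_closedBall_inter_sphere_le (E := Euc (m + 1)) m
  obtain ⟨B, hB, hint⟩ := exists_lintegral_rpow_neg_dist_le (μH[m].restrict S) hK (d := m)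
    (α := m - 2 * lam) (by linarith) (by linarith) fun x r hr _ => by
      rw [Measure.restrict_apply measurableSet_closedBall, Real.rpow_natCast]
      exact hball x r hr
  refine ⟨B.toReal + 1, by positivity, fun z ρ hρ x => ?_⟩
  rw [setLIntegral_sphere_rpow_neg_dist m.cast_nonneg _ x z hρ, sub_sub_cancel, mul_comm,
    ENNReal.ofReal_mul (by positivity)]
  gcongr
  exact (hint _).trans ((ENNReal.le_ofReal_iff_toReal_le hB (by positivity)).2 (by linarith))

/-- For `n ≥ 2` and `0 < λ ≤ (n-1)/2` there is a constant `C`, depending only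
on `n` and `λ`, such that for every sphere of radius `ρ > 0` in `ℝⁿ` (arbitrary center `z`)
and every `x ∈ ℝⁿ`,
`∫_{S_ρ} |x - y|^{-(n-1-2λ)} dσ_ρ(y) ≤ C ρ^{2λ}`,
where `σ_ρ` is the `(n-1)`-dimensional Hausdorff measure on the sphere. -/
theorem stmt0 (n : ℕ) (hn : 2 ≤ n) (lam : ℝ) (hlam0 : 0 < lam)
    (hlam1 : lam ≤ ((n : ℝ) - 1) / 2) :
    ∃ C : ℝ, 0 < C ∧ ∀ (z : Euc n) (ρ : ℝ), 0 < ρ → ∀ x : Euc n,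
      (∫⁻ y in Metric.sphere z ρ,
          ENNReal.ofReal (‖x - y‖ ^ (-((n : ℝ) - 1 - 2 * lam)))
          ∂(MeasureTheory.Measure.hausdorffMeasure ((n : ℝ) - 1)))
        ≤ ENNReal.ofReal (C * ρ ^ (2 * lam)) :=
  stmt0_general n lam hlam0 hlam1
end
end

section
/- Let X and Y be Banach spaces (over ℝ or ℂ), let D ⊆ Y be a dense linear subspace, let j ≥ 1, and let Q : D × ⋯ × D → X (j factors) be a j-multilinear map. Define T : D → X by T(f) := Q(f,…,f), and assume there is a constant C ≥ 0 such that ‖T(f)‖_X ≤ C ‖f‖_Y^j for every f ∈ D. Then there exists a unique continuous map T̃ : Y → X with T̃(f) = T(f) for all f ∈ D, and it satisfies ‖T̃(f)‖_X ≤ C ‖f‖_Y^j for every f ∈ Y. -/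
/-!
By polarization, the symmetrization of `Q`, which agrees with `Q` on the diagonal, is bounded by
`2 ^ j * C * (∑ i, ‖x i‖) ^ j`; by homogeneity it is therefore a bounded, hence continuous,
multilinear map. Its diagonal `T` is then Lipschitz on bounded sets, so uniformly continuous on the
trace of `D` on every ball, and extends continuously from the dense subspace `D` to `Y` because `X`
is complete. The bound and uniqueness pass to the closure of `D`, which is `Y`.
-/

open Finset Filter Metric Topology

namespace MultilinearMap

variable {R M N ι : Type*} [Semiring R] [AddCommGroup M] [Module R M] [AddCommGroup N]
  [Module R N] [Fintype ι]

variable {E G : Type*} [SeminormedAddCommGroup E] [Module R E] [SeminormedAddCommGroup G]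
  [Module R G]

section

variable [DecidableEq ι]

theorem sum_perm_apply_eq_sum_neg_one_pow_smul (f : MultilinearMap R (fun _ : ι => M) N)
    (x : ι → M) :
    ∑ σ : Equiv.Perm ι, f (fun i => x (σ i)) =
      ∑ B : Finset ι, (-1 : ℤ) ^ #B • f (fun _ => ∑ i ∈ Bᶜ, x i) := by
  symm
  calc ∑ B : Finset ι, (-1 : ℤ) ^ #B • f (fun _ => ∑ i ∈ Bᶜ, x i)
      = ∑ B : Finset ι, ∑ r ∈ Fintype.piFinset (fun _ => Bᶜ),
          (-1 : ℤ) ^ #B • f (fun i => x (r i)) := by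
        simp_rw [f.map_sum_finset, smul_sum]
    _ = ∑ r : ι → ι, ∑ B ∈ (univ.image r)ᶜ.powerset, (-1 : ℤ) ^ #B • f (fun i => x (r i)) :=
        sum_comm' fun B r => by
          simp only [mem_univ, true_and, and_true, Fintype.mem_piFinset, mem_compl, mem_powerset,
            subset_iff, mem_image]
          exact ⟨fun h b hb ⟨a, ha⟩ => h a (ha ▸ hb), fun h a ha => h ha ⟨a, rfl⟩⟩
    -- the alternating sum over the subsets `B` missing the range of `r` vanishes unless `r` is onto
    _ = ∑ r : ι → ι, if Function.Surjective r then f (fun i => x (r i)) else 0 := by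
        refine sum_congr rfl fun r _ => ?_
        rw [← sum_smul, sum_powerset_neg_one_pow_card]
        simp [← coe_eq_univ, Set.range_eq_univ]
    _ = ∑ σ : Equiv.Perm ι, f (fun i => x (σ i)) := by
        rw [← sum_filter]
        refine (sum_bij (fun (σ : Equiv.Perm ι) _ => (σ : ι → ι))
          (fun σ _ => by simpa using σ.surjective) (fun _ _ _ _ h => Equiv.coe_fn_injective h)
          (fun r hr => ?_) fun _ _ => rfl).symm
        have hr : Function.Bijective r := Finite.surjective_iff_bijective.1 (by simpa using hr)
        exact ⟨Equiv.ofBijective r hr, mem_univ _, rfl⟩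

theorem norm_sum_perm_apply_le (f : MultilinearMap R (fun _ : ι => E) G) {C : ℝ} (hC : 0 ≤ C)
    {n : ℕ} (hf : ∀ y, ‖f (fun _ => y)‖ ≤ C * ‖y‖ ^ n) (x : ι → E) :
    ‖∑ σ : Equiv.Perm ι, f (fun i => x (σ i))‖ ≤ 2 ^ Fintype.card ι * C * (∑ i, ‖x i‖) ^ n := by
  rw [sum_perm_apply_eq_sum_neg_one_pow_smul]
  calc _ ≤ ∑ B : Finset ι, ‖f (fun _ => ∑ i ∈ Bᶜ, x i)‖ :=
        (norm_sum_le _ _).trans <| sum_le_sum fun B _ => (norm_zsmul_le _ _).trans (by simp)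
    _ ≤ ∑ _ : Finset ι, C * (∑ i, ‖x i‖) ^ n := by
        refine sum_le_sum fun B _ => (hf _).trans ?_
        gcongr
        exact (norm_sum_le _ _).trans
          (sum_le_sum_of_subset_of_nonneg (subset_univ _) fun i _ _ => norm_nonneg _)
    _ = 2 ^ Fintype.card ι * C * (∑ i, ‖x i‖) ^ n := by
        rw [sum_const, card_univ, Fintype.card_finset, nsmul_eq_mul]
        push_cast
        ring

section Symmetrize

variable {𝕜 : Type*} [Field 𝕜] [Module 𝕜 M] [Module 𝕜 N]

def symmetrize (f : MultilinearMap 𝕜 (fun _ : ι => M) N) : MultilinearMap 𝕜 (fun _ : ι => M) N :=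
  ((Fintype.card ι).factorial : 𝕜)⁻¹ • ∑ σ : Equiv.Perm ι, f.domDomCongr σ

theorem symmetrize_apply (f : MultilinearMap 𝕜 (fun _ : ι => M) N) (x : ι → M) :
    f.symmetrize x =
      ((Fintype.card ι).factorial : 𝕜)⁻¹ • ∑ σ : Equiv.Perm ι, f (fun i => x (σ i)) := by
  simp only [symmetrize, smul_apply, _root_.sum_apply]
  rfl

theorem symmetrize_apply_diag [CharZero 𝕜] (f : MultilinearMap 𝕜 (fun _ : ι => M) N) (y : M) :
    f.symmetrize (fun _ => y) = f (fun _ => y) := by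
  rw [symmetrize_apply, sum_const, card_univ, Fintype.card_perm, ← Nat.cast_smul_eq_nsmul 𝕜,
    smul_smul, inv_mul_cancel₀ (Nat.cast_ne_zero.2 (Nat.factorial_ne_zero _)), one_smul]

end Symmetrize

theorem norm_symmetrize_apply_le {𝕜 : Type*} [NormedField 𝕜] [NormedSpace 𝕜 E] [NormedSpace 𝕜 G]
    (f : MultilinearMap 𝕜 (fun _ : ι => E) G) {C : ℝ} (hC : 0 ≤ C)
    {n : ℕ} (hf : ∀ y, ‖f (fun _ => y)‖ ≤ C * ‖y‖ ^ n) (x : ι → E) :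
    ‖f.symmetrize x‖ ≤
      ‖((Fintype.card ι).factorial : 𝕜)⁻¹‖ * 2 ^ Fintype.card ι * C * (∑ i, ‖x i‖) ^ n := by
  rw [symmetrize_apply, norm_smul, mul_assoc, mul_assoc]
  gcongr
  simpa only [mul_assoc] using f.norm_sum_perm_apply_le hC hf x

end

theorem exists_bound_of_norm_le_mul_sum_pow {𝕜 F : Type*} [NontriviallyNormedField 𝕜]
    [NormedAddCommGroup F] [NormedSpace 𝕜 F] [NormedSpace 𝕜 G]
    (f : MultilinearMap 𝕜 (fun _ : ι => F) G) {K : ℝ} (hK : 0 ≤ K) {n : ℕ}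
    (hf : ∀ m, ‖f m‖ ≤ K * (∑ i, ‖m i‖) ^ n) :
    ∃ K', ∀ m, ‖f m‖ ≤ K' * ∏ i, ‖m i‖ := by
  obtain ⟨c, hc⟩ := NormedField.exists_one_lt_norm 𝕜
  refine ⟨K * Fintype.card ι ^ n * ‖c‖ ^ Fintype.card ι,
    f.bound_of_shell_of_norm_map_coord_zero ?_ (fun _ => one_pos) (fun _ => hc) ?_⟩
  · intro m i hi
    rw [f.map_coord_zero i (norm_eq_zero.1 hi), norm_zero]
  · intro m hlow hup
    have hsum : ∑ i, ‖m i‖ ≤ Fintype.card ι := by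
      simpa using sum_le_sum fun i (_ : i ∈ univ) => (hup i).le
    have hprod : 1 ≤ ‖c‖ ^ Fintype.card ι * ∏ i, ‖m i‖ := by
      rw [← card_univ, ← prod_const, ← prod_mul_distrib]
      exact one_le_prod fun i _ => (div_le_iff₀' (zero_lt_one.trans hc)).1 (hlow i)
    calc ‖f m‖ ≤ K * (∑ i, ‖m i‖) ^ n := hf m
      _ ≤ K * Fintype.card ι ^ n * 1 := by rw [mul_one]; gcongr
      _ ≤ K * Fintype.card ι ^ n * (‖c‖ ^ Fintype.card ι * ∏ i, ‖m i‖) := by gcongr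
      _ = _ := by ring

end MultilinearMap

theorem ContinuousMultilinearMap.lipschitzOnWith_diag_closedBall {𝕜 ι E G : Type*}
    [NontriviallyNormedField 𝕜] [Fintype ι] [SeminormedAddCommGroup E] [NormedSpace 𝕜 E]
    [SeminormedAddCommGroup G] [NormedSpace 𝕜 G]
    (f : ContinuousMultilinearMap 𝕜 (fun _ : ι => E) G) (r : ℝ) :
    LipschitzOnWith (‖f‖ * Fintype.card ι * r ^ (Fintype.card ι - 1)).toNNReal
      (fun x => f fun _ => x) (closedBall 0 r) := by
  refine LipschitzOnWith.of_dist_le' fun x hx y hy => ?_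
  rw [mem_closedBall_zero_iff] at hx hy
  have hr : 0 ≤ r := (norm_nonneg x).trans hx
  rw [dist_eq_norm, dist_eq_norm]
  calc ‖f (fun _ => x) - f (fun _ => y)‖
      ≤ ‖f‖ * Fintype.card ι * max ‖fun _ : ι => x‖ ‖fun _ : ι => y‖ ^ (Fintype.card ι - 1) *
          ‖(fun _ : ι => x) - fun _ => y‖ := f.norm_image_sub_le _ _
    _ ≤ ‖f‖ * Fintype.card ι * r ^ (Fintype.card ι - 1) * ‖x - y‖ := by
        gcongr
        · exact max_le ((pi_norm_const_le (ι := ι) x).trans hx)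
            ((pi_norm_const_le (ι := ι) y).trans hy)
        · exact pi_norm_const_le (ι := ι) (x - y)

theorem Dense.continuous_extend_of_locally_uniformContinuousOn {α β : Type*} [UniformSpace α]
    [UniformSpace β] [CompleteSpace β] [T0Space β] {s : Set α} (hs : Dense s) {f : s → β}
    (hf : ∀ a, ∃ U ∈ 𝓝 a, UniformContinuousOn f (Subtype.val ⁻¹' U)) :
    Continuous (hs.extend f) := by
  refine hs.continuous_extend fun a => ?_
  obtain ⟨U, hU, hfU⟩ := hf a
  have := hs.isDenseInducing_val.comap_nhds_neBot a
  have hcauchy : Cauchy (comap ((↑) : s → α) (𝓝 a)) :=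
    cauchy_nhds.comap uniformity_subtype.ge
  exact CompleteSpace.complete
    (hcauchy.map_of_le hfU (le_principal_iff.2 (preimage_mem_comap hU)))

theorem stmt12_general (𝕜 : Type*) [RCLike 𝕜] (X Y : Type*)
    [NormedAddCommGroup X] [NormedSpace 𝕜 X] [CompleteSpace X]
    [NormedAddCommGroup Y] [NormedSpace 𝕜 Y]
    (D : Subspace 𝕜 Y) (hD : Dense (D : Set Y))
    (j : ℕ)
    (Q : MultilinearMap 𝕜 (fun _ : Fin j => D) X)
    (C : ℝ) (hC : 0 ≤ C)
    (hT : ∀ f : D, ‖Q (fun _ => f)‖ ≤ C * ‖(f : Y)‖ ^ j) :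
    ∃ T' : Y → X, Continuous T' ∧ (∀ f : D, T' f = Q fun _ => f) ∧
      (∀ f : Y, ‖T' f‖ ≤ C * ‖f‖ ^ j) ∧
      ∀ T'' : Y → X, Continuous T'' → (∀ f : D, T'' f = Q fun _ => f) → T'' = T' := by
  obtain ⟨K, hK⟩ := Q.symmetrize.exists_bound_of_norm_le_mul_sum_pow (by positivity)
    (Q.norm_symmetrize_apply_le hC hT)
  set S := Q.symmetrize.mkContinuous K hK
  set g : D → X := fun f => Q fun _ => f
  have hSg : (fun f : D => S fun _ => f) = g := funext Q.symmetrize_apply_diag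
  have hg : Continuous g := hSg ▸ S.cont.comp (continuous_pi fun _ => continuous_id)
  have hg_unif : ∀ y : Y, ∃ U ∈ 𝓝 y, UniformContinuousOn g (Subtype.val ⁻¹' U) := fun y =>
    ⟨ball y 1, ball_mem_nhds y one_pos,
      (hSg ▸ S.lipschitzOnWith_diag_closedBall (‖y‖ + 1)).uniformContinuousOn.mono fun _ hf =>
        mem_closedBall_zero_iff.2 (norm_le_norm_add_const_of_dist_le (mem_ball.1 hf).le)⟩
  have hext : ∀ f : D, hD.extend g f = g f := hD.extend_eq hg
  have hcont := hD.continuous_extend_of_locally_uniformContinuousOn hg_unif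
  refine ⟨hD.extend g, hcont, hext, hD.induction (fun y hy => ?_) ?_,
    fun T'' hT''c hT'' => (hD.extend_unique hT'' hT''c).symm⟩
  · exact (hext ⟨y, hy⟩).symm ▸ hT ⟨y, hy⟩
  · exact isClosed_le hcont.norm (continuous_const.mul (continuous_norm.pow j))

/-- a `j`-multilinear map `Q` on a dense subspace `D` of a Banach space `Y`,
whose restriction to the diagonal `T(f) = Q(f,…,f)` satisfies `‖T(f)‖ ≤ C‖f‖^j`, gives rise
to a unique continuous extension `T̃ : Y → X` of `T`, which satisfies the same bound. -/
theorem stmt12 (𝕜 : Type*) [RCLike 𝕜] (X Y : Type*)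
    [NormedAddCommGroup X] [NormedSpace 𝕜 X] [CompleteSpace X]
    [NormedAddCommGroup Y] [NormedSpace 𝕜 Y] [CompleteSpace Y]
    (D : Subspace 𝕜 Y) (hD : Dense (D : Set Y))
    (j : ℕ) (hj : 1 ≤ j)
    (Q : MultilinearMap 𝕜 (fun _ : Fin j => D) X)
    (C : ℝ) (hC : 0 ≤ C)
    (hT : ∀ f : D, ‖Q (fun _ => f)‖ ≤ C * ‖(f : Y)‖ ^ j) :
    ∃ T' : Y → X, Continuous T' ∧ (∀ f : D, T' f = Q fun _ => f) ∧
      (∀ f : Y, ‖T' f‖ ≤ C * ‖f‖ ^ j) ∧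
      ∀ T'' : Y → X, Continuous T'' → (∀ f : D, T'' f = Q fun _ => f) → T'' = T' :=
  stmt12_general 𝕜 X Y D hD j Q C hC hT
end

section
/- Let n ≥ 1, γ ∈ ℝ, c > 0 and C > 0. Let u : ℝⁿ → [0,∞] be a measurable function with u(η) ≥ C ⟨η⟩^{−n/2−γ} for almost every η with |η| > c, and let ψ : ℝⁿ → [0,∞) be a continuous non-negative function with ψ(0) > 0. Then there is a constant C' > 0 such that the convolution satisfies (ψ * u)(η) ≥ C' ⟨η⟩^{−n/2−γ} for every η with |η| ≥ 2c; consequently, for every α ≥ γ, ∫_{ℝⁿ} ⟨η⟩^{2α} ((ψ * u)(η))² dη = ∞, i.e. ⟨·⟩^α (ψ*u) ∉ L²(ℝⁿ). (This is the mechanism showing that a tempered distribution whose non-negative Fourier transform dominates ⟨η⟩^{−n/2−γ} at infinity does not belong to W^{α,2}_{loc}(ℝⁿ) for α ≥ γ.) -/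
open MeasureTheory
open scoped ENNReal

noncomputable section

/-- The Japanese bracket `⟨x⟩ = (1+|x|²)^{1/2}`. -/
def jap {n : ℕ} (x : Euc n) : ℝ := Real.sqrt (1 + ‖x‖ ^ 2)

/-!
On a small ball `B` around the origin `ψ ≥ ψ(0)/2`, and Peetre's inequality
`⟨η⟩^t ≤ (√2 ⟨ξ⟩)^|t| ⟨η - ξ⟩^t` makes `⟨η - ξ⟩^t` comparable to `⟨η⟩^t` uniformly in `ξ ∈ B`.
Integrating the lower bound for `u (η - ξ)` over `ξ ∈ B` gives the lower bound for `ψ * u`.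
Squaring and weighting, `⟨η⟩^{2α} (ψ * u)(η)² ≳ ⟨η⟩^{2α - n - 2γ} ≳ |η|^{-n}` at infinity, and
`|η|^{-n}` is not integrable at infinity: in polar coordinates it becomes `∫^∞ dr / r`.
-/

open Set Metric Module

lemma lintegral_eq_top_of_rpow_neg_finrank_le {E : Type*} [NormedAddCommGroup E]
    [NormedSpace ℝ E] [FiniteDimensional ℝ E] [Nontrivial E] [MeasurableSpace E] [BorelSpace E]
    (μ : Measure E) [μ.IsAddHaarMeasure] {f : E → ℝ≥0∞} {R δ : ℝ} (hR : 0 < R) (hδ : 0 < δ)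
    (hf : ∀ x, R ≤ ‖x‖ → ENNReal.ofReal (δ * ‖x‖ ^ (-(finrank ℝ E : ℝ))) ≤ f x) :
    ∫⁻ x, f x ∂μ = ⊤ := by
  set g : ℝ → ℝ := (Ici R).indicator fun y ↦ δ * y ^ (-(finrank ℝ E : ℝ))
  have hg_nonneg : ∀ y, 0 ≤ g y :=
    indicator_nonneg fun y hy ↦ mul_nonneg hδ.le (Real.rpow_nonneg (hR.le.trans hy) _)
  have hg_meas : Measurable g :=
    (measurable_const.mul (measurable_id.pow_const _)).indicator measurableSet_Ici
  have hg_not_integrable : ¬ Integrable (fun x ↦ g ‖x‖) μ := by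
    rw [integrable_fun_norm_addHaar]
    intro h
    have hinv : IntegrableOn (fun y : ℝ ↦ y ^ (-1 : ℝ)) (Ioi R) := by
      have h' : IntegrableOn (fun y : ℝ ↦ δ⁻¹ * (y ^ (finrank ℝ E - 1) • g y)) (Ioi R) :=
        (h.mono_set (Ioi_subset_Ioi hR.le)).const_mul δ⁻¹
      refine h'.congr_fun (fun y hy ↦ ?_) measurableSet_Ioi
      have hy0 : 0 < y := hR.trans hy
      simp only [g, indicator_of_mem (mem_Ici.2 (mem_Ioi.1 hy).le), smul_eq_mul]
      rw [← Real.rpow_natCast, Nat.cast_sub finrank_pos, Nat.cast_one,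
        show (-1 : ℝ) = (finrank ℝ E - 1 : ℝ) + -(finrank ℝ E : ℝ) by ring, Real.rpow_add hy0]
      field_simp
    exact lt_irrefl _ ((integrableOn_Ioi_rpow_iff hR).1 hinv)
  have hg_top : ∫⁻ x, ENNReal.ofReal (g ‖x‖) ∂μ = ⊤ := by
    by_contra h
    exact hg_not_integrable ((lintegral_ofReal_ne_top_iff_integrable
      (hg_meas.comp measurable_norm).aestronglyMeasurable
      (.of_forall fun x ↦ hg_nonneg _)).1 h)
  refine eq_top_mono (lintegral_mono fun x ↦ ?_) hg_top
  by_cases hx : R ≤ ‖x‖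
  · simpa [g, hx] using hf x hx
  · simp [g, hx]

lemma one_le_jap {n : ℕ} (x : Euc n) : 1 ≤ jap x :=
  Real.one_le_sqrt.2 (le_add_of_nonneg_right (sq_nonneg _))

lemma jap_pos {n : ℕ} (x : Euc n) : 0 < jap x := one_pos.trans_le (one_le_jap x)

lemma jap_le_one_add_norm {n : ℕ} (x : Euc n) : jap x ≤ 1 + ‖x‖ := sqrt_one_add_norm_sq_le x

lemma jap_neg {n : ℕ} (x : Euc n) : jap (-x) = jap x := by simp [jap]

lemma jap_le_sqrt_two_mul_norm {n : ℕ} {x : Euc n} (hx : 1 ≤ ‖x‖) : jap x ≤ √2 * ‖x‖ := by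
  rw [jap, show √2 * ‖x‖ = √(2 * ‖x‖ ^ 2) by
    rw [Real.sqrt_mul zero_le_two, Real.sqrt_sq (norm_nonneg x)]]
  exact Real.sqrt_le_sqrt (by nlinarith)

lemma jap_add_le {n : ℕ} (a b : Euc n) : jap (a + b) ≤ √2 * (jap a * jap b) := by
  have key : 1 + ‖a + b‖ ^ 2 ≤ 2 * ((1 + ‖a‖ ^ 2) * (1 + ‖b‖ ^ 2)) := by
    have := norm_add_le a b
    nlinarith [norm_nonneg (a + b), sq_nonneg (‖a‖ - ‖b‖), sq_nonneg (‖a‖ * ‖b‖)]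
  calc jap (a + b) ≤ √(2 * ((1 + ‖a‖ ^ 2) * (1 + ‖b‖ ^ 2))) := Real.sqrt_le_sqrt key
    _ = √2 * (jap a * jap b) := by rw [Real.sqrt_mul zero_le_two, Real.sqrt_mul (by positivity)]; rfl

lemma rpow_jap_le_mul_rpow_jap_sub {n : ℕ} (t : ℝ) (η ξ : Euc n) :
    jap η ^ t ≤ (√2 * jap ξ) ^ |t| * jap (η - ξ) ^ t := by
  set K := √2 * jap ξ
  have hK : 0 < K := mul_pos (by positivity) (jap_pos ξ)
  rcases le_or_gt 0 t with ht | ht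
  · have h : jap η ≤ K * jap (η - ξ) := by
      simpa [K, mul_assoc, mul_comm (jap ξ)] using jap_add_le (η - ξ) ξ
    rw [abs_of_nonneg ht, ← Real.mul_rpow hK.le (jap_pos _).le]
    exact Real.rpow_le_rpow (jap_pos η).le h ht
  · have h : jap (η - ξ) ≤ K * jap η := by
      simpa [K, sub_eq_add_neg, jap_neg, mul_assoc, mul_comm (jap ξ)] using jap_add_le η (-ξ)
    calc jap η ^ t = K ^ (-t) * (K * jap η) ^ t := by
          rw [Real.mul_rpow hK.le (jap_pos η).le, Real.rpow_neg hK.le, inv_mul_cancel_left₀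
            (Real.rpow_pos_of_pos hK t).ne']
      _ ≤ K ^ |t| * jap (η - ξ) ^ t := by
          rw [abs_of_neg ht]
          exact mul_le_mul_of_nonneg_left (Real.rpow_le_rpow_of_nonpos (jap_pos _) h ht.le)
            (Real.rpow_pos_of_pos hK _).le

lemma rpow_jap_div_le_rpow_jap_sub {n : ℕ} {r : ℝ} (t : ℝ) (η : Euc n) {ξ : Euc n}
    (hξ : ‖ξ‖ ≤ r) : jap η ^ t / (√2 * (1 + r)) ^ |t| ≤ jap (η - ξ) ^ t := by
  have hK : 0 < √2 * jap ξ := mul_pos (by positivity) (jap_pos ξ)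
  have hKr : √2 * jap ξ ≤ √2 * (1 + r) := by gcongr; linarith [jap_le_one_add_norm ξ]
  rw [div_le_iff₀' (Real.rpow_pos_of_pos (hK.trans_le hKr) _)]
  exact (rpow_jap_le_mul_rpow_jap_sub t η ξ).trans <| mul_le_mul_of_nonneg_right
    (Real.rpow_le_rpow hK.le hKr (abs_nonneg t)) (Real.rpow_pos_of_pos (jap_pos _) t).le

lemma ofReal_mul_rpow_jap_le_lintegral_conv {n : ℕ} {t a c C r : ℝ} (hr : 0 ≤ r) (ha : 0 ≤ a)
    (hC : 0 ≤ C) {u : Euc n → ℝ≥0∞}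
    (hlow : ∀ᵐ η ∂(volume : Measure (Euc n)), c < ‖η‖ →
      ENNReal.ofReal (C * jap η ^ t) ≤ u η)
    {ψ : Euc n → ℝ} (hψ : ∀ ξ ∈ closedBall (0 : Euc n) r, a ≤ ψ ξ)
    {η : Euc n} (hη : c + r < ‖η‖) :
    ENNReal.ofReal (a * C * volume.real (closedBall (0 : Euc n) r) / (√2 * (1 + r)) ^ |t| *
        jap η ^ t) ≤ ∫⁻ ξ, ENNReal.ofReal (ψ ξ) * u (η - ξ) := by
  set M := (√2 * (1 + r)) ^ |t|
  have hjap : 0 ≤ jap η ^ t / M := div_nonneg (Real.rpow_pos_of_pos (jap_pos η) t).le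
    (by positivity)
  have hlow' : ∀ᵐ ξ ∂(volume : Measure (Euc n)), c < ‖η - ξ‖ →
      ENNReal.ofReal (C * jap (η - ξ) ^ t) ≤ u (η - ξ) :=
    (Measure.measurePreserving_sub_left volume η).quasiMeasurePreserving.ae hlow
  calc ENNReal.ofReal (a * C * volume.real (closedBall (0 : Euc n) r) / M * jap η ^ t)
      = ∫⁻ _ in closedBall (0 : Euc n) r, ENNReal.ofReal (a * (C * (jap η ^ t / M))) := by
        rw [setLIntegral_const, ← ofReal_measureReal measure_closedBall_lt_top.ne,
          ← ENNReal.ofReal_mul (mul_nonneg ha (mul_nonneg hC hjap))]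
        congr 1
        ring
    _ ≤ ∫⁻ ξ in closedBall (0 : Euc n) r, ENNReal.ofReal (ψ ξ) * u (η - ξ) := by
        refine setLIntegral_mono_ae' measurableSet_closedBall ?_
        filter_upwards [hlow'] with ξ hu hξ
        have hξr : ‖ξ‖ ≤ r := by simpa using hξ
        have hψξ := hψ ξ hξ
        calc ENNReal.ofReal (a * (C * (jap η ^ t / M)))
            ≤ ENNReal.ofReal (ψ ξ * (C * jap (η - ξ) ^ t)) := ENNReal.ofReal_le_ofReal <|
              mul_le_mul hψξ (mul_le_mul_of_nonneg_left (rpow_jap_div_le_rpow_jap_sub t η hξr) hC)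
                (mul_nonneg hC hjap) (ha.trans hψξ)
          _ = ENNReal.ofReal (ψ ξ) * ENNReal.ofReal (C * jap (η - ξ) ^ t) :=
              ENNReal.ofReal_mul (ha.trans hψξ)
          _ ≤ ENNReal.ofReal (ψ ξ) * u (η - ξ) := by
              gcongr
              exact hu (by linarith [norm_sub_norm_le η ξ])
    _ ≤ ∫⁻ ξ, ENNReal.ofReal (ψ ξ) * u (η - ξ) := setLIntegral_le_lintegral _ _

lemma exists_rpow_jap_le_lintegral_conv {n : ℕ} {t c C : ℝ} (hc : 0 < c) (hC : 0 < C)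
    {u : Euc n → ℝ≥0∞}
    (hlow : ∀ᵐ η ∂(volume : Measure (Euc n)), c < ‖η‖ →
      ENNReal.ofReal (C * jap η ^ t) ≤ u η)
    {ψ : Euc n → ℝ} (hψ : ContinuousAt ψ 0) (hψ0 : 0 < ψ 0) :
    ∃ C' : ℝ, 0 < C' ∧ ∀ η : Euc n, 2 * c ≤ ‖η‖ →
      ENNReal.ofReal (C' * jap η ^ t) ≤ ∫⁻ ξ, ENNReal.ofReal (ψ ξ) * u (η - ξ) := by
  obtain ⟨ε, hε, hψε⟩ := nhds_basis_closedBall.eventually_iff.1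
    (hψ.eventually (eventually_ge_nhds (half_lt_self hψ0)))
  set r := min ε (c / 2)
  have hr : 0 < r := lt_min hε (half_pos hc)
  have hψr : ∀ ξ ∈ closedBall (0 : Euc n) r, ψ 0 / 2 ≤ ψ ξ :=
    fun ξ hξ ↦ hψε (closedBall_subset_closedBall (min_le_left _ _) hξ)
  refine ⟨ψ 0 / 2 * C * volume.real (closedBall (0 : Euc n) r) / (√2 * (1 + r)) ^ |t|, ?_,
    fun η hη ↦ ofReal_mul_rpow_jap_le_lintegral_conv hr.le (half_pos hψ0).le hC.le hlow hψr ?_⟩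
  · have := ENNReal.toReal_pos (measure_closedBall_pos volume (0 : Euc n) hr).ne'
      measure_closedBall_lt_top.ne
    positivity
  · linarith [min_le_right ε (c / 2)]

lemma rpow_sqrt_two_mul_norm_le_rpow_jap {n : ℕ} {d s : ℝ} (hd : 0 ≤ d) (hs : -d ≤ s)
    {x : Euc n} (hx : 1 ≤ ‖x‖) : (√2 * ‖x‖) ^ (-d) ≤ jap x ^ s :=
  calc (√2 * ‖x‖) ^ (-d) ≤ jap x ^ (-d) :=
        Real.rpow_le_rpow_of_nonpos (jap_pos x) (jap_le_sqrt_two_mul_norm hx) (neg_nonpos.2 hd)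
    _ ≤ jap x ^ s := Real.rpow_le_rpow_of_exponent_le (one_le_jap x) hs

lemma sq_mul_rpow_sqrt_two_mul_norm_le {n : ℕ} {d α t : ℝ} (K : ℝ) (hd : 0 ≤ d)
    (hs : -d ≤ 2 * α + 2 * t) {x : Euc n} (hx : 1 ≤ ‖x‖) :
    K ^ 2 * (√2 * ‖x‖) ^ (-d) ≤ jap x ^ (2 * α) * (K * jap x ^ t) ^ 2 := by
  have hjap := jap_pos x
  calc K ^ 2 * (√2 * ‖x‖) ^ (-d) ≤ K ^ 2 * jap x ^ (2 * α + 2 * t) := by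
        gcongr
        exact rpow_sqrt_two_mul_norm_le_rpow_jap hd hs hx
    _ = jap x ^ (2 * α) * (K * jap x ^ t) ^ 2 := by
        rw [Real.rpow_add hjap, mul_comm (2 : ℝ) t, Real.rpow_mul hjap.le t 2, Real.rpow_two]
        ring

theorem stmt13_general (n : ℕ) (hn : 1 ≤ n) (γ : ℝ) (c C : ℝ) (hc : 0 < c) (hC : 0 < C)
    (u : Euc n → ℝ≥0∞)
    (hlow : ∀ᵐ η ∂(volume : Measure (Euc n)), c < ‖η‖ →
      ENNReal.ofReal (C * jap η ^ (-(n : ℝ) / 2 - γ)) ≤ u η)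
    (ψ : Euc n → ℝ) (hψc : Continuous ψ) (hψpos : 0 < ψ 0) :
    ∃ C' : ℝ, 0 < C' ∧
      (∀ η : Euc n, 2 * c ≤ ‖η‖ →
        ENNReal.ofReal (C' * jap η ^ (-(n : ℝ) / 2 - γ)) ≤
          ∫⁻ ξ : Euc n, ENNReal.ofReal (ψ ξ) * u (η - ξ)) ∧
      ∀ α : ℝ, γ ≤ α →
        (∫⁻ η : Euc n, ENNReal.ofReal (jap η ^ (2 * α)) *
            (∫⁻ ξ : Euc n, ENNReal.ofReal (ψ ξ) * u (η - ξ)) ^ 2) = ⊤ := by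
  set t := -(n : ℝ) / 2 - γ with ht
  obtain ⟨C', hC', hconv⟩ := exists_rpow_jap_le_lintegral_conv hc hC hlow hψc.continuousAt hψpos
  refine ⟨C', hC', hconv, fun α hα ↦ ?_⟩
  have : Nonempty (Fin n) := ⟨⟨0, hn⟩⟩
  refine lintegral_eq_top_of_rpow_neg_finrank_le volume (R := max (2 * c) 1)
    (δ := C' ^ 2 * √2 ^ (-(n : ℝ))) (by positivity) (by positivity) fun η hη ↦ ?_
  rw [finrank_euclideanSpace_fin]
  calc ENNReal.ofReal (C' ^ 2 * √2 ^ (-(n : ℝ)) * ‖η‖ ^ (-(n : ℝ)))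
      ≤ ENNReal.ofReal (jap η ^ (2 * α) * (C' * jap η ^ t) ^ 2) := by
        rw [mul_assoc, ← Real.mul_rpow (by positivity) (norm_nonneg η)]
        exact ENNReal.ofReal_le_ofReal <| sq_mul_rpow_sqrt_two_mul_norm_le C' (Nat.cast_nonneg n)
          (by linarith [ht]) (le_of_max_le_right hη)
    _ = ENNReal.ofReal (jap η ^ (2 * α)) * ENNReal.ofReal (C' * jap η ^ t) ^ 2 := by
        rw [ENNReal.ofReal_mul (Real.rpow_pos_of_pos (jap_pos η) _).le,
          ENNReal.ofReal_pow (mul_nonneg hC'.le (Real.rpow_pos_of_pos (jap_pos η) _).le)]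
    _ ≤ ENNReal.ofReal (jap η ^ (2 * α)) *
          (∫⁻ ξ : Euc n, ENNReal.ofReal (ψ ξ) * u (η - ξ)) ^ 2 := by
        gcongr
        exact hconv η (le_of_max_le_left hη)

/-- if a non-negative measurable `u` satisfies `u(η) ≥ C⟨η⟩^{-n/2-γ}` for a.e.
`|η| > c`, and `ψ ≥ 0` is continuous with `ψ(0) > 0`, then `(ψ*u)(η) ≥ C'⟨η⟩^{-n/2-γ}` for
`|η| ≥ 2c`; consequently `⟨·⟩^α (ψ*u) ∉ L²` for every `α ≥ γ`. -/
theorem stmt13 (n : ℕ) (hn : 1 ≤ n) (γ : ℝ) (c C : ℝ) (hc : 0 < c) (hC : 0 < C)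
    (u : Euc n → ℝ≥0∞) (hu : Measurable u)
    (hlow : ∀ᵐ η ∂(volume : Measure (Euc n)), c < ‖η‖ →
      ENNReal.ofReal (C * jap η ^ (-(n : ℝ) / 2 - γ)) ≤ u η)
    (ψ : Euc n → ℝ) (hψc : Continuous ψ) (hψ0 : ∀ ξ, 0 ≤ ψ ξ) (hψpos : 0 < ψ 0) :
    ∃ C' : ℝ, 0 < C' ∧
      (∀ η : Euc n, 2 * c ≤ ‖η‖ →
        ENNReal.ofReal (C' * jap η ^ (-(n : ℝ) / 2 - γ)) ≤
          ∫⁻ ξ : Euc n, ENNReal.ofReal (ψ ξ) * u (η - ξ)) ∧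
      ∀ α : ℝ, γ ≤ α →
        (∫⁻ η : Euc n, ENNReal.ofReal (jap η ^ (2 * α)) *
            (∫⁻ ξ : Euc n, ENNReal.ofReal (ψ ξ) * u (η - ξ)) ^ 2) = ⊤ :=
  stmt13_general n hn γ c C hc hC u hlow ψ hψc hψpos
end
end
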